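/- arXiv:1108.6312 — 3 statements merged into one kernel-verified Lean document; each statement's English description precedes it below -/
import Mathlib

section
/- Let L ≥ 2 be an integer, ω_L := exp(2πi/L) the primitive L-th root of unity, F := diag(1, ω_L, ω_L², …, ω_L^{L−1}) ∈ ℂ^{L×L}, and 𝟏 ∈ ℂ^L the all-ones vector. Let h₁₁, h₁₂, h₂₁, h₂₂ be nonzero complex numbers and b₂, …, b_L nonzero complex scalars. Define v_{1,1} := 𝟏 and recursively v_{1,ℓ} := b_ℓ·(h₁₁h₂₂/(h₁₂h₂₁))·F^{−1}·v_{1,ℓ−1} for ℓ = 2, …, L, and v_{2,ℓ} := (h₁₁/h₁₂)·v_{1,ℓ} for ℓ = 1, …, L−1. Then: (i) h₁₂·v_{2,ℓ} = h₁₁·v_{1,ℓ} for all ℓ ∈ {1,…,L−1}; (ii) h₂₁·F·v_{1,ℓ+1} = b_{ℓ+1}·h₂₂·v_{2,ℓ} for all ℓ ∈ {1,…,L−1}; (iii) for j ≠ ℓ in {1,…,L}, the vectors v_{1,j} and v_{1,ℓ} are orthogonal, i.e., Σ_{t=1}^{L} (v_{1,j})_t · conj((v_{1,ℓ})_t) =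 0. -/
/-!
Unrolling the recursion gives `v_{1,ℓ} = c_ℓ · (ζ^{t(ℓ-1)})_t` with `ζ = ω⁻¹` a primitive `L`-th root
of unity, so the inner product of `v_{1,j}` and `v_{1,ℓ}` is a multiple of `∑_{t<L} η^t` for the
`L`-th root of unity `η = ζ^{j-ℓ} ≠ 1`, which vanishes. Parts (i) and (ii) are direct algebra.
-/
theorem eq_prod_mul_pow_of_forall_eq_mul {ι R : Type*} [CommMonoid R] {v : ℕ → ι → R}
    {a : ℕ → R} {x : ι → R} {m N : ℕ}
    (h : ∀ n, m < n → n ≤ N → ∀ t, v n t = a n * x t * v (n - 1) t) :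
    ∀ n, m ≤ n → n ≤ N → ∀ t, v n t = (∏ k ∈ Finset.Ioc m n, a k) * x t ^ (n - m) * v m t := by
  intro n hmn
  induction n, hmn using Nat.le_induction with
  | base => simp
  | succ n hmn ih =>
    intro hnN t
    rw [h (n + 1) (by omega) hnN t, Nat.add_sub_cancel, ih (by omega) t,
      Finset.prod_Ioc_succ_top hmn, Nat.sub_add_comm hmn, pow_succ]
    ac_rfl

theorem IsPrimitiveRoot.sum_pow_mul_conj_pow_eq_zero {ζ : ℂ} {L j ℓ : ℕ}
    (hζ : IsPrimitiveRoot ζ L) (hj : j < L) (hℓ : ℓ < L) (hjℓ : j ≠ ℓ) :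
    ∑ t : Fin L, (ζ ^ (t : ℕ)) ^ j * starRingEnd ℂ ((ζ ^ (t : ℕ)) ^ ℓ) = 0 := by
  have hL : L ≠ 0 := by omega
  have hconj : starRingEnd ℂ ζ = ζ⁻¹ := (RCLike.inv_eq_conj (hζ.norm'_eq_one hL)).symm
  have hterm : ∀ t : ℕ, (ζ ^ t) ^ j * starRingEnd ℂ ((ζ ^ t) ^ ℓ) = (ζ ^ ((j : ℤ) - ℓ)) ^ t := by
    intro t
    rw [map_pow, map_pow, hconj, zpow_sub₀ (hζ.ne_zero hL), zpow_natCast, zpow_natCast]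
    field_simp
    ring
  set η := ζ ^ ((j : ℤ) - ℓ)
  have hηL : η ^ L = 1 := by
    rw [← zpow_natCast, ← zpow_mul, mul_comm, zpow_mul, zpow_natCast, hζ.pow_eq_one, one_zpow]
  have hη : η ≠ 1 := fun h => hjℓ <| by
    have := Int.eq_zero_of_abs_lt_dvd ((hζ.zpow_eq_one_iff_dvd _).1 h) (by rw [abs_lt]; omega)
    omega
  simp only [hterm]
  rw [Fin.sum_univ_eq_sum_range (η ^ ·), geom_sum_eq hη, hηL, sub_self, zero_div]

theorem two_user_alignment_general (L : ℕ)
    (ω : ℂ) (hω : ω = Complex.exp (2 * Real.pi * Complex.I / L))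
    (h11 h12 h21 h22 : ℂ) (h12ne : h12 ≠ 0) (h21ne : h21 ≠ 0)
    (b : ℕ → ℂ)
    (v1 v2 : ℕ → Fin L → ℂ)
    (hv1_one : ∀ t : Fin L, v1 1 t = 1)
    (hv1_rec : ∀ ℓ, 2 ≤ ℓ → ℓ ≤ L → ∀ t : Fin L,
      v1 ℓ t = b ℓ * (h11 * h22 / (h12 * h21)) * (ω ^ (t : ℕ))⁻¹ * v1 (ℓ - 1) t)
    (hv2 : ∀ ℓ, 1 ≤ ℓ → ℓ ≤ L - 1 → ∀ t : Fin L, v2 ℓ t = h11 / h12 * v1 ℓ t) :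
    (∀ ℓ, 1 ≤ ℓ → ℓ ≤ L - 1 → ∀ t : Fin L, h12 * v2 ℓ t = h11 * v1 ℓ t) ∧
    (∀ ℓ, 1 ≤ ℓ → ℓ ≤ L - 1 → ∀ t : Fin L,
        h21 * (ω ^ (t : ℕ) * v1 (ℓ + 1) t) = b (ℓ + 1) * h22 * v2 ℓ t) ∧
    (∀ j ℓ, 1 ≤ j → j ≤ L → 1 ≤ ℓ → ℓ ≤ L → j ≠ ℓ →
        ∑ t : Fin L, v1 j t * starRingEnd ℂ (v1 ℓ t) = 0) := by
  refine ⟨fun ℓ hℓ1 hℓL t => ?_, fun ℓ hℓ1 hℓL t => ?_, fun j ℓ hj1 hjL hℓ1 hℓL hjℓ => ?_⟩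
  · rw [hv2 ℓ hℓ1 hℓL t]
    field_simp
  · have hωt : ω ^ (t : ℕ) ≠ 0 := pow_ne_zero _ (hω ▸ Complex.exp_ne_zero _)
    rw [hv2 ℓ hℓ1 hℓL t, hv1_rec (ℓ + 1) (by omega) (by omega) t, Nat.add_sub_cancel]
    field_simp
  · have hζ : IsPrimitiveRoot ω⁻¹ L := (hω ▸ Complex.isPrimitiveRoot_exp L (by omega)).inv
    have closed := eq_prod_mul_pow_of_forall_eq_mul hv1_rec
    simp only [closed j hj1 hjL, closed ℓ hℓ1 hℓL, hv1_one, mul_one, ← inv_pow, map_mul,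
      mul_mul_mul_comm _ (_ ^ (j - 1)), ← Finset.mul_sum]
    rw [hζ.sum_pow_mul_conj_pow_eq_zero (by omega) (by omega) (by omega), mul_zero]

/-- Two-user signal alignment: with `ω_L = exp(2πi/L)`, the diagonal matrix
`F = diag(1, ω_L, …, ω_L^{L−1})` (acting entrywise as `(F·v)_t = ω_L^{t−1}·v_t`), nonzero
channel gains `h₁₁, h₁₂, h₂₁, h₂₂`, nonzero scalars `b₂, …, b_L`, and transmit vectors
`v_{1,1} = 𝟏`, `v_{1,ℓ} = b_ℓ·(h₁₁h₂₂/(h₁₂h₂₁))·F⁻¹·v_{1,ℓ−1}`,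
`v_{2,ℓ} = (h₁₁/h₁₂)·v_{1,ℓ}`, we have:
(i) `h₁₂·v_{2,ℓ} = h₁₁·v_{1,ℓ}` for `1 ≤ ℓ ≤ L−1` (alignment at receiver one);
(ii) `h₂₁·F·v_{1,ℓ+1} = b_{ℓ+1}·h₂₂·v_{2,ℓ}` for `1 ≤ ℓ ≤ L−1` (alignment at receiver two);
(iii) for `j ≠ ℓ` in `{1,…,L}`, the vectors `v_{1,j}` and `v_{1,ℓ}` are orthogonal. -/
theorem two_user_alignment (L : ℕ) (hL : 2 ≤ L)
    (ω : ℂ) (hω : ω = Complex.exp (2 * Real.pi * Complex.I / L))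
    (h11 h12 h21 h22 : ℂ) (h11ne : h11 ≠ 0) (h12ne : h12 ≠ 0)
    (h21ne : h21 ≠ 0) (h22ne : h22 ≠ 0)
    (b : ℕ → ℂ) (hb : ∀ ℓ, 2 ≤ ℓ → ℓ ≤ L → b ℓ ≠ 0)
    (v1 v2 : ℕ → Fin L → ℂ)
    (hv1_one : ∀ t : Fin L, v1 1 t = 1)
    (hv1_rec : ∀ ℓ, 2 ≤ ℓ → ℓ ≤ L → ∀ t : Fin L,
      v1 ℓ t = b ℓ * (h11 * h22 / (h12 * h21)) * (ω ^ (t : ℕ))⁻¹ * v1 (ℓ - 1) t)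
    (hv2 : ∀ ℓ, 1 ≤ ℓ → ℓ ≤ L - 1 → ∀ t : Fin L, v2 ℓ t = h11 / h12 * v1 ℓ t) :
    (∀ ℓ, 1 ≤ ℓ → ℓ ≤ L - 1 → ∀ t : Fin L, h12 * v2 ℓ t = h11 * v1 ℓ t) ∧
    (∀ ℓ, 1 ≤ ℓ → ℓ ≤ L - 1 → ∀ t : Fin L,
        h21 * (ω ^ (t : ℕ) * v1 (ℓ + 1) t) = b (ℓ + 1) * h22 * v2 ℓ t) ∧
    (∀ j ℓ, 1 ≤ j → j ≤ L → 1 ≤ ℓ → ℓ ≤ L → j ≠ ℓ →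
        ∑ t : Fin L, v1 j t * starRingEnd ℂ (v1 ℓ t) = 0) :=
  two_user_alignment_general L ω hω h11 h12 h21 h22 h12ne h21ne b v1 v2 hv1_one hv1_rec hv2
end

section
/- Let F be a field (e.g., ℤ/qℤ for q prime), let L ≥ 2 be an integer, and let a_{1,2}, …, a_{1,L} and a_{2,1}, …, a_{2,L−1} be nonzero elements of F. Then the F-linear map from F^{2L−1} to F^{2L−1} sending (w_{1,1}, …, w_{1,L}, w_{2,1}, …, w_{2,L−1}) to (u_{1,1}, …, u_{1,L}, u_{2,1}, …, u_{2,L−1}), where u_{1,j} := w_{1,j} + w_{2,j} for j ∈ {1,…,L−1}, u_{1,L} := w_{1,L}, and u_{2,j} := a_{1,j+1}·w_{1,j+1} + a_{2,j}·w_{2,j} for j ∈ {1,…,L−1}, is a bijection. -/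
/-!
Over a field, an injective endomorphism of a finite-dimensional space is bijective, so it
suffices that the kernel is trivial. This is back-substitution: `u_{1,L} = w_{1,L}`, and once
`w_{1,j+1} = 0` is known, `u_{2,j} = 0` forces `w_{2,j} = 0` (as `a_{2,j} ≠ 0`) and then
`u_{1,j} = 0` forces `w_{1,j} = 0`.
-/

namespace ComputationAlignment

variable {F : Type*} [Field F] {L : ℕ}

/-- Zero-indexed: index `i` stands for the paper's `j = i + 1`. -/
def decodingMap (a1 a2 : ℕ → F) :
    ((Fin L → F) × (Fin (L - 1) → F)) →ₗ[F] ((Fin L → F) × (Fin (L - 1) → F)) where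
  toFun w :=
    (fun i => if h : (i : ℕ) < L - 1 then w.1 i + w.2 ⟨i, h⟩ else w.1 i,
      fun i => a1 ((i : ℕ) + 2) * w.1 ⟨(i : ℕ) + 1, Nat.add_lt_of_lt_sub i.isLt⟩ +
        a2 ((i : ℕ) + 1) * w.2 i)
  map_add' x y := by
    ext i
    · simp only [Prod.fst_add, Prod.snd_add, Pi.add_apply]
      split_ifs <;> ring
    · simp only [Prod.fst_add, Prod.snd_add, Pi.add_apply]
      ring
  map_smul' c x := by
    ext i
    · simp only [Prod.smul_fst, Prod.smul_snd, Pi.smul_apply, smul_eq_mul, RingHom.id_apply]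
      split_ifs <;> ring
    · simp only [Prod.smul_fst, Prod.smul_snd, Pi.smul_apply, smul_eq_mul, RingHom.id_apply]
      ring

variable {a1 a2 : ℕ → F} {w : (Fin L → F) × (Fin (L - 1) → F)}

theorem decodingMap_fst_apply (i : Fin L) :
    (decodingMap a1 a2 w).1 i = if h : (i : ℕ) < L - 1 then w.1 i + w.2 ⟨i, h⟩ else w.1 i :=
  rfl

theorem decodingMap_snd_apply (i : Fin (L - 1)) :
    (decodingMap a1 a2 w).2 i =
      a1 ((i : ℕ) + 2) * w.1 ⟨(i : ℕ) + 1, Nat.add_lt_of_lt_sub i.isLt⟩ +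
        a2 ((i : ℕ) + 1) * w.2 i :=
  rfl

section Kernel

variable (hw : decodingMap a1 a2 w = 0)
include hw

theorem fst_last_eq_zero_of_decodingMap_eq_zero (i : Fin L) (hi : L - 1 ≤ i) : w.1 i = 0 := by
  have := congrFun (congrArg Prod.fst hw) i
  rwa [decodingMap_fst_apply, dif_neg (by omega)] at this

theorem snd_eq_zero_of_decodingMap_eq_zero (ha2 : ∀ i : Fin (L - 1), a2 ((i : ℕ) + 1) ≠ 0)
    (i : Fin (L - 1)) (hsucc : w.1 ⟨(i : ℕ) + 1, Nat.add_lt_of_lt_sub i.isLt⟩ = 0) :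
    w.2 i = 0 := by
  have := congrFun (congrArg Prod.snd hw) i
  rw [decodingMap_snd_apply, hsucc, mul_zero, zero_add] at this
  exact (mul_eq_zero.mp this).resolve_left (ha2 i)

theorem fst_eq_zero_of_decodingMap_eq_zero (i : Fin (L - 1)) (hsnd : w.2 i = 0) :
    w.1 ⟨i, by omega⟩ = 0 := by
  have := congrFun (congrArg Prod.fst hw) ⟨i, by omega⟩
  rwa [decodingMap_fst_apply, dif_pos i.isLt, hsnd, add_zero] at this

end Kernel

theorem decodingMap_injective (ha2 : ∀ i : Fin (L - 1), a2 ((i : ℕ) + 1) ≠ 0) :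
    Function.Injective (decodingMap (L := L) a1 a2) := by
  refine (injective_iff_map_eq_zero _).mpr fun w hw => ?_
  have hfst : ∀ k (hk : k ≤ L - 1) (hkL : k < L), w.1 ⟨k, hkL⟩ = 0 := by
    intro k hk
    induction hk using Nat.decreasingInduction with
    | self => exact fun _ => fst_last_eq_zero_of_decodingMap_eq_zero hw _ le_rfl
    | of_succ k hk ih =>
      intro _
      have hsnd := snd_eq_zero_of_decodingMap_eq_zero hw ha2 ⟨k, hk⟩ (ih (by omega))
      exact fst_eq_zero_of_decodingMap_eq_zero hw ⟨k, hk⟩ hsnd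
  ext i
  · exact hfst i (by omega) i.isLt
  · exact snd_eq_zero_of_decodingMap_eq_zero hw ha2 i (hfst _ (by omega) _)

end ComputationAlignment

/-- Invertibility of the decoded functions in the two-user computation-alignment scheme:
over a field `F`, with nonzero coefficients `a_{1,2}, …, a_{1,L}` and `a_{2,1}, …, a_{2,L−1}`,
the linear map sending `(w_{1,1},…,w_{1,L}, w_{2,1},…,w_{2,L−1})` to
`(u_{1,1},…,u_{1,L}, u_{2,1},…,u_{2,L−1})`, where `u_{1,j} = w_{1,j} + w_{2,j}` for `j < L`,
`u_{1,L} = w_{1,L}`, and `u_{2,j} = a_{1,j+1}·w_{1,j+1} + a_{2,j}·w_{2,j}`, is a bijection.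
(Vectors `w₁ : Fin L → F` and `w₂ : Fin (L−1) → F` are zero-indexed: index `i` stands for
the paper's index `j = i + 1`.) -/
theorem decoded_functions_invertible {F : Type*} [Field F] (L : ℕ)
    (a1 a2 : ℕ → F)
    (ha2 : ∀ j, 1 ≤ j → j ≤ L - 1 → a2 j ≠ 0) :
    Function.Bijective
      (fun w : (Fin L → F) × (Fin (L - 1) → F) =>
        ((fun i : Fin L =>
            if h : (i : ℕ) < L - 1 then w.1 i + w.2 ⟨i, h⟩ else w.1 i,
          fun i : Fin (L - 1) =>
            a1 ((i : ℕ) + 2) * w.1 ⟨(i : ℕ) + 1, by omega⟩ + a2 ((i : ℕ) + 1) * w.2 i) :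
          (Fin L → F) × (Fin (L - 1) → F))) := by
  have hinj : Function.Injective (ComputationAlignment.decodingMap (L := L) a1 a2) :=
    ComputationAlignment.decodingMap_injective fun i => ha2 _ (by omega) (by omega)
  exact ⟨hinj, LinearMap.injective_iff_surjective.mp hinj⟩
end

section
/- −∫₀¹ e^{−s} ln(s) ds + ∫₁^∞ e^{−s} ln(s) ds ≤ (3/2)·ln(2). -/
/-!
Split the range at `s = 1`. On `(0, 1)` we have `log s ≤ 0`, so `e^{-s}` may be replaced by the
upper bound `∑_{k<5} (-s)^k/k! + s^5/100`, and `∫₀¹ s^k log s ds = -1/(k+1)²` gives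
`-∫₀¹ e^{-s} log s ds ≤ 5739/7200`. On `(1, ∞)` substitute `s = 1 + t` and bound `log (1 + t)`
by the cubic Taylor polynomial of `log` at `2`, which is an upper bound on all of `(0, ∞)`
because `log (1 + v) ≤ v - v ^ 2 / 2 + v ^ 3 / 3` for every `v > -1`; the moments
`∫₀^∞ e^{-t} t^k dt = k!` then give `∫₁^∞ e^{-s} log s ds ≤ e^{-1} (log 2 - 1/24)`.
Numerically `0.79709 + 0.23967 ≤ 1.03972`.
-/

open MeasureTheory Real Set
open scoped Nat

theorem log_one_add_le_cubic {v : ℝ} (hv : -1 < v) :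
    log (1 + v) ≤ v - v ^ 2 / 2 + v ^ 3 / 3 := by
  set g : ℝ → ℝ := fun x => x - x ^ 2 / 2 + x ^ 3 / 3 - log (1 + x)
  -- `g' x = x ^ 3 / (1 + x)` has the sign of `x`, so `g` is minimal at `0`, where it vanishes.
  have hg' : ∀ x, -1 < x → HasDerivAt g (x ^ 3 / (1 + x)) x := by
    intro x hx
    have h := (((hasDerivAt_id' x).sub ((hasDerivAt_pow 2 x).div_const 2)).add
      ((hasDerivAt_pow 3 x).div_const 3)).sub (((hasDerivAt_id' x).const_add 1).log (by linarith))
    refine h.congr_deriv ?_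
    field_simp [show 1 + x ≠ 0 by linarith]
    ring
  have hcont : ContinuousOn g (Ioi (-1)) := fun x hx =>
    (hg' x hx).continuousAt.continuousWithinAt
  suffices 0 ≤ g v by simp only [g] at this; linarith
  rcases le_total 0 v with h | h
  · have hmono : MonotoneOn g (Icc 0 v) :=
      monotoneOn_of_hasDerivWithinAt_nonneg (convex_Icc 0 v)
        (hcont.mono fun x hx => show -1 < x by linarith [hx.1])
        (fun x hx => (hg' x (by linarith [(interior_subset hx : x ∈ Icc 0 v).1])).hasDerivWithinAt)
        fun x hx => by
          have : 0 ≤ x := (interior_subset hx : x ∈ Icc 0 v).1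
          positivity
    simpa [g] using hmono (left_mem_Icc.2 h) (right_mem_Icc.2 h) h
  · have hanti : AntitoneOn g (Icc v 0) :=
      antitoneOn_of_hasDerivWithinAt_nonpos (convex_Icc v 0)
        (hcont.mono fun x hx => show -1 < x by linarith [hx.1])
        (fun x hx => (hg' x (by linarith [(interior_subset hx : x ∈ Icc v 0).1])).hasDerivWithinAt)
        fun x hx => by
          obtain ⟨hvx, hx0⟩ : x ∈ Icc v 0 := interior_subset hx
          exact div_nonpos_of_nonpos_of_nonneg (by nlinarith [sq_nonneg x]) (by linarith)
    simpa [g] using hanti (left_mem_Icc.2 h) (right_mem_Icc.2 h) h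

/-- The coefficients are those of `log 2 + v - v ^ 2 / 2 + v ^ 3 / 3` with `v = (t - 1) / 2`. -/
theorem log_one_add_le_taylor_at_one {t : ℝ} (ht : -1 < t) :
    log (1 + t) ≤ ∑ k : Fin 4, ![log 2 - 2 / 3, 7 / 8, -1 / 4, 1 / 24] k * t ^ (k : ℕ) := by
  have hsplit : log (1 + t) = log 2 + log (1 + (t - 1) / 2) := by
    rw [← log_mul two_ne_zero (by linarith)]
    ring_nf
  have hcubic := log_one_add_le_cubic (v := (t - 1) / 2) (by linarith)
  have hexpand : ∑ k : Fin 4, ![log 2 - 2 / 3, 7 / 8, -1 / 4, 1 / 24] k * t ^ (k : ℕ) =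
      log 2 - 2 / 3 + 7 / 8 * t - t ^ 2 / 4 + t ^ 3 / 24 := by
    simp only [Fin.sum_univ_four, Matrix.cons_val, Fin.coe_ofNat_eq_mod, Nat.reduceMod]
    ring
  rw [hsplit, hexpand]
  linarith

/-- `1 / 100` is the remainder bound `|x| ^ 5 * 6 / (5! * 5)` of `Real.exp_bound`. -/
theorem exp_neg_le_quintic {x : ℝ} (h0 : 0 ≤ x) (h1 : x ≤ 1) :
    exp (-x) ≤ ∑ k : Fin 6, ![1, -1, 1 / 2, -1 / 6, 1 / 24, 1 / 100] k * x ^ (k : ℕ) := by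
  have h := Real.exp_bound (x := -x) (by rwa [abs_neg, abs_of_nonneg h0]) (n := 5) (by norm_num)
  norm_num [Finset.sum_range_succ, Nat.factorial, abs_of_nonneg h0] at h
  have hexpand : ∑ k : Fin 6, ![1, -1, 1 / 2, -1 / 6, 1 / 24, 1 / 100] k * x ^ (k : ℕ) =
      1 - x + x ^ 2 / 2 - x ^ 3 / 6 + x ^ 4 / 24 + x ^ 5 / 100 := by
    simp only [Fin.sum_univ_six, Matrix.cons_val, Fin.coe_ofNat_eq_mod, Nat.reduceMod]
    ring
  rw [hexpand]
  linarith [(abs_le.1 h).2]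

theorem integral_pow_mul_log (n : ℕ) :
    ∫ x in (0:ℝ)..1, x ^ n * log x = -1 / ((n : ℝ) + 1) ^ 2 := by
  set F : ℝ → ℝ := fun x => x ^ (n + 1) * log x / (n + 1) - x ^ (n + 1) / (n + 1) ^ 2
  have hF : ∀ x ∈ Ioo (0:ℝ) 1, HasDerivAt F (x ^ n * log x) x := by
    intro x hx
    have h := (((hasDerivAt_pow (n + 1) x).mul (hasDerivAt_log hx.1.ne')).div_const
      ((n : ℝ) + 1)).sub ((hasDerivAt_pow (n + 1) x).div_const (((n : ℝ) + 1) ^ 2))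
    refine h.congr_deriv ?_
    field_simp [hx.1.ne']
    push_cast
    ring
  have hcont : ContinuousOn F (Icc 0 1) := by
    have : Continuous fun x : ℝ => x ^ n * (x * log x) / (n + 1) - x ^ (n + 1) / (n + 1) ^ 2 := by
      have := continuous_mul_log
      fun_prop
    exact this.continuousOn.congr fun x _ => by simp only [F]; ring
  rw [intervalIntegral.integral_eq_sub_of_hasDerivAt_of_le zero_le_one hcont hF
    (intervalIntegral.intervalIntegrable_log'.continuousOn_mul (continuous_pow n).continuousOn)]
  simp only [F]
  field_simp
  simp

theorem integral_sum_pow_mul_log {N : ℕ} (c : Fin N → ℝ) :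
    ∫ x in (0:ℝ)..1, (∑ k, c k * x ^ (k : ℕ)) * log x = -∑ k, c k / ((k : ℝ) + 1) ^ 2 := by
  simp_rw [Finset.sum_mul, mul_assoc]
  rw [intervalIntegral.integral_finsetSum fun k _ =>
    (intervalIntegral.intervalIntegrable_log'.continuousOn_mul
      (continuous_pow _).continuousOn).const_mul (c k)]
  simp [integral_pow_mul_log, div_eq_mul_inv, Finset.sum_neg_distrib]

theorem integral_exp_neg_mul_pow (n : ℕ) :
    ∫ t in Ioi (0:ℝ), exp (-t) * t ^ n = n ! := by
  rw [← Gamma_nat_eq_factorial, Gamma_eq_integral (by positivity)]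
  simp [← rpow_natCast]

theorem integrableOn_exp_neg_mul_pow (n : ℕ) :
    IntegrableOn (fun t : ℝ => exp (-t) * t ^ n) (Ioi 0) := by
  simpa [← rpow_natCast] using GammaIntegral_convergent (s := n + 1) (by positivity)

theorem integrableOn_exp_neg_mul_sum_pow {N : ℕ} (c : Fin N → ℝ) :
    IntegrableOn (fun t : ℝ => exp (-t) * ∑ k, c k * t ^ (k : ℕ)) (Ioi 0) := by
  simp_rw [Finset.mul_sum, mul_left_comm (exp _)]
  exact integrable_finsetSum _ fun k _ => (integrableOn_exp_neg_mul_pow k).const_mul (c k)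

theorem integral_exp_neg_mul_sum_pow {N : ℕ} (c : Fin N → ℝ) :
    ∫ t in Ioi (0:ℝ), exp (-t) * ∑ k, c k * t ^ (k : ℕ) = ∑ k, c k * (k : ℕ)! := by
  simp_rw [Finset.mul_sum, mul_left_comm (exp _)]
  rw [integral_finsetSum _ fun (k : Fin N) _ => (integrableOn_exp_neg_mul_pow k).const_mul (c k)]
  simp [integral_const_mul, integral_exp_neg_mul_pow]

theorem setIntegral_Ioi_comp_add (g : ℝ → ℝ) (a : ℝ) :
    ∫ t in Ioi (0:ℝ), g (t + a) = ∫ s in Ioi a, g s := by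
  simpa using (measurePreserving_add_right volume a).setIntegral_preimage_emb
    (measurableEmbedding_addRight a) g (Ioi a)

theorem setIntegral_Ioi_one_exp_neg_mul_log :
    ∫ s in Ioi (1:ℝ), exp (-s) * log s = exp (-1) * ∫ t in Ioi (0:ℝ), exp (-t) * log (1 + t) := by
  rw [← setIntegral_Ioi_comp_add, ← integral_const_mul]
  congr 1 with t
  rw [neg_add, exp_add, add_comm t]
  ring

theorem integrableOn_exp_neg_mul_log_one_add :
    IntegrableOn (fun t : ℝ => exp (-t) * log (1 + t)) (Ioi 0) := by
  refine (integrableOn_exp_neg_mul_pow 1).mono' (by fun_prop) ?_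
  filter_upwards [ae_restrict_mem measurableSet_Ioi] with t (ht : 0 < t)
  have hlog_nonneg : 0 ≤ log (1 + t) := log_nonneg (by linarith)
  have hlog_le : log (1 + t) ≤ t := by linarith [log_le_sub_one_of_pos (by linarith : 0 < 1 + t)]
  rw [norm_mul, norm_of_nonneg (exp_pos _).le, norm_of_nonneg hlog_nonneg, pow_one]
  exact mul_le_mul_of_nonneg_left hlog_le (exp_pos _).le

theorem integral_exp_neg_mul_log_zero_one_ge :
    -(5739 / 7200 : ℝ) ≤ ∫ s in (0:ℝ)..1, exp (-s) * log s := by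
  have h := intervalIntegral.integral_mono_on zero_le_one
    (intervalIntegral.intervalIntegrable_log'.continuousOn_mul (by fun_prop))
    (intervalIntegral.intervalIntegrable_log'.continuousOn_mul (by fun_prop))
    fun x hx => mul_le_mul_of_nonpos_right (exp_neg_le_quintic hx.1 hx.2) (log_nonpos hx.1 hx.2)
  rw [integral_sum_pow_mul_log] at h
  norm_num [Fin.sum_univ_succ] at h
  linarith

theorem integral_Ioi_one_exp_neg_mul_log_le :
    ∫ s in Ioi (1:ℝ), exp (-s) * log s ≤ exp (-1) * (log 2 - 1 / 24) := by
  rw [setIntegral_Ioi_one_exp_neg_mul_log]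
  refine mul_le_mul_of_nonneg_left ?_ (exp_pos _).le
  calc ∫ t in Ioi (0:ℝ), exp (-t) * log (1 + t)
      ≤ ∫ t in Ioi (0:ℝ), exp (-t) *
          ∑ k : Fin 4, ![log 2 - 2 / 3, 7 / 8, -1 / 4, 1 / 24] k * t ^ (k : ℕ) :=
        setIntegral_mono_on integrableOn_exp_neg_mul_log_one_add
          (integrableOn_exp_neg_mul_sum_pow _) measurableSet_Ioi fun t (ht : 0 < t) =>
            mul_le_mul_of_nonneg_left (log_one_add_le_taylor_at_one (by linarith)) (exp_pos _).le
    _ = log 2 - 1 / 24 := by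
        rw [integral_exp_neg_mul_sum_pow]
        norm_num [Fin.sum_univ_succ, Nat.factorial]
        ring

/-- `−∫₀¹ e^{−s} ln s ds + ∫₁^∞ e^{−s} ln s ds ≤ (3/2)·ln 2`. -/
theorem exp_log_integral_le :
    -(∫ s in (0:ℝ)..1, Real.exp (-s) * Real.log s) +
        (∫ s in Set.Ioi (1:ℝ), Real.exp (-s) * Real.log s) ≤ 3 / 2 * Real.log 2 := by
  have hexp : exp (-1) < 0.3678795 := by
    rw [exp_neg]
    calc (exp 1)⁻¹ < (2.7182818283 : ℝ)⁻¹ := inv_strictAnti₀ (by norm_num) exp_one_gt_d9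
      _ ≤ 0.3678795 := by norm_num
  nlinarith [integral_exp_neg_mul_log_zero_one_ge, integral_Ioi_one_exp_neg_mul_log_le,
    log_two_gt_d9, log_two_lt_d9, exp_pos (-1)]
end
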